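/- Let M = {f_1,...,f_{4m+2}} ⊂ R^{2m+1} be as above. Suppose S ⊆ M is span-closed in M (every element of M in the linear span of S lies in S), f_{4m+2} = e_1 − e_2 + ⋯ + e_{2m+1} ∈ S, f_{4m+2} lies in the linear span of S ∖ {f_{4m+2}}, and S ∖ {f_{4m+2}} is a union of intervals of the form [e_s, e_t]. Then S = M. -/
import Mathlib


open Finset

noncomputable def nbM (m : ℕ) (i : Fin (4*m+2)) : Fin (2*m+1) → ℝ :=
  if i.val = 4*m+1 then fun t => (-1 : ℝ) ^ (t : ℕ)
  else if i.val % 2 = 0 then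
    fun t => if t.val = i.val / 2 then 1 else 0
  else
    fun t => if t.val = i.val / 2 then 1 else if t.val = i.val / 2 + 1 then -1 else 0

/-- The index of `f_{4m+2} = e_1 - e_2 + ⋯ + e_{2m+1}`. -/
def lastIdx (m : ℕ) : Fin (4*m+2) := ⟨4*m+1, by omega⟩

/-- if `S ⊆ M` is span-closed, contains `f_{4m+2}`, `f_{4m+2}` lies in the span
of `S ∖ {f_{4m+2}}`, and `S ∖ {f_{4m+2}}` is a union of intervals, then `S = M`. -/
theorem stmt6 (m : ℕ) (A : Set (Fin (4*m+2)))
    (hclosed : ∀ i : Fin (4*m+2),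
      nbM m i ∈ Submodule.span ℝ (nbM m '' A) → i ∈ A)
    (hmem : lastIdx m ∈ A)
    (hspan : nbM m (lastIdx m) ∈ Submodule.span ℝ (nbM m '' (A \ {lastIdx m})))
    (hunion : ∃ (k : ℕ) (T : Fin k → Set (Fin (4*m+2))),
      A \ {lastIdx m} = ⋃ i, T i ∧
      ∀ i, ∃ s t : ℕ, s ≤ t ∧ t ≤ 2*m ∧
        T i = {j : Fin (4*m+2) | 2*s ≤ j.val ∧ j.val ≤ 2*t}) :
    A = Set.univ := by
  obtain ⟨k, T, hTeq, hT⟩ := hunion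
  choose s t hst htm hTdef using hT
  -- every coordinate is covered by some interval
  have hcov : ∀ c : Fin (2*m+1), ∃ i : Fin k, s i ≤ c.val ∧ c.val ≤ t i := by
    intro c
    by_contra h
    push_neg at h
    have hker : nbM m '' (A \ {lastIdx m}) ⊆
        (LinearMap.ker (LinearMap.proj c : (Fin (2*m+1) → ℝ) →ₗ[ℝ] ℝ) :
          Submodule ℝ (Fin (2*m+1) → ℝ)) := by
      rintro _ ⟨j, hj, rfl⟩
      rw [hTeq] at hj
      rw [Set.mem_iUnion] at hj
      obtain ⟨i, hji⟩ := hj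
      rw [hTdef i] at hji
      obtain ⟨h1, h2⟩ := hji
      have hi := h i
      have htmi := htm i
      simp only [SetLike.mem_coe, LinearMap.mem_ker, LinearMap.proj_apply]
      unfold nbM
      have hjne : j.val ≠ 4*m+1 := by omega
      rw [if_neg hjne]
      by_cases hpar : j.val % 2 = 0
      · rw [if_pos hpar]
        have hc : c.val ≠ j.val / 2 := by omega
        simp [hc]
      · rw [if_neg hpar]
        have hc1 : c.val ≠ j.val / 2 := by omega
        have hc2 : c.val ≠ j.val / 2 + 1 := by omega
        simp [hc1, hc2]
    have hz := Submodule.span_le.mpr hker hspan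
    simp only [LinearMap.mem_ker, LinearMap.proj_apply] at hz
    have : nbM m (lastIdx m) c = (-1 : ℝ) ^ (c : ℕ) := by
      simp [nbM, lastIdx]
    rw [this] at hz
    exact pow_ne_zero _ (by norm_num : (-1:ℝ) ≠ 0) hz
  -- each standard basis vector is in the image of A
  have hbase : ∀ c : Fin (2*m+1), (Pi.basisFun ℝ (Fin (2*m+1))) c ∈ nbM m '' A := by
    intro c
    obtain ⟨i, hs, ht⟩ := hcov c
    have hlt : 2*c.val < 4*m+2 := by have := c.isLt; omega
    refine ⟨⟨2*c.val, hlt⟩, ?_, ?_⟩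
    · have : (⟨2*c.val, hlt⟩ : Fin (4*m+2)) ∈ A \ {lastIdx m} := by
        rw [hTeq, Set.mem_iUnion]
        exact ⟨i, by rw [hTdef i]; simp only [Set.mem_setOf_eq, Fin.val_mk]; omega⟩
      exact this.1
    · funext u
      have hne : 2*c.val ≠ 4*m+1 := by omega
      have hpar : (2*c.val) % 2 = 0 := by omega
      have hdiv : (2*c.val) / 2 = c.val := by omega
      simp only [nbM, hne, if_false, hpar, if_true, hdiv]
      rw [Pi.basisFun_apply]
      by_cases hu : u = c
      · subst hu; simp
      · have : u.val ≠ c.val := fun h => hu (Fin.ext h)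
        simp [Pi.single_apply, hu, this]
  have htop : Submodule.span ℝ (nbM m '' A) = ⊤ := by
    rw [← top_le_iff, ← (Pi.basisFun ℝ (Fin (2*m+1))).span_eq]
    apply Submodule.span_le.mpr
    rintro _ ⟨c, rfl⟩
    exact Submodule.subset_span (hbase c)
  ext i
  simp only [Set.mem_univ, iff_true]
  exact hclosed i (by rw [htop]; trivial)
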